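/- arXiv:1902.00434 — 4 statements merged into one kernel-verified Lean document; each statement's English description precedes it below -/
import Mathlib

section
/- The generalized sliced Wasserstein distance with an injective generalized Radon transform is a metric (the paper's Proposition): if for all Borel probability measures μ, ν on ℝ^d, g(·,θ)_#μ = g(·,θ)_#ν for σ-almost every θ implies μ = ν, then GSW_p is a metric on the set of Borel probability measures on ℝ^d with finite p-th moment under every slice: it is non-negative, symmetric, satisfies the triangle inequality, and GSW_p(μ,ν) = 0 if and only if μ = ν. -/
open MeasureTheory ENNReal

/-- The `p`-Wasserstein distance between two measures, defined as the infimum over all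
couplings (probability measures on the product whose marginals are `μ` and `ν`) of
`(∫ d(x,y)^p dγ)^(1/p)`. -/
noncomputable def wassersteinDist {X : Type*} [MeasurableSpace X] [PseudoMetricSpace X]
    (p : ℝ) (μ ν : Measure X) : ℝ≥0∞ :=
  (⨅ γ ∈ {γ : Measure (X × X) | IsProbabilityMeasure γ ∧
      γ.map Prod.fst = μ ∧ γ.map Prod.snd = ν},
    ∫⁻ q, ENNReal.ofReal (dist q.1 q.2 ^ p) ∂γ) ^ (1 / p)

/-- The generalized sliced `p`-Wasserstein distance associated with the defining function `g`
and the measure `σ` on the parameter space. -/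
noncomputable def GSW {d : ℕ} {Θ : Type*} [MeasurableSpace Θ] (p : ℝ) (σ : Measure Θ)
    (g : (Fin d → ℝ) → Θ → ℝ) (μ ν : Measure (Fin d → ℝ)) : ℝ≥0∞ :=
  (∫⁻ θ, (wassersteinDist p (μ.map fun x => g x θ) (ν.map fun x => g x θ)) ^ p ∂σ) ^ (1 / p)

/-! Each slice `W_p` behaves like a metric on probability measures on `ℝ`. Symmetry comes from
swapping a coupling. The triangle inequality comes from gluing two couplings along their common
marginal (by disintegration) and applying Minkowski's inequality. Definiteness holds because a
coupling of cost `< δ^p ε` moves at most mass `ε` by `δ` or more, so `μ F ≤ ν (cthickening δ F)`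
for every closed `F`. These properties pass to `GSW_p`, the `L^p(σ)` norm of
`θ ↦ W_p(g(·,θ)_#μ, g(·,θ)_#ν)`, by Minkowski's inequality in `θ`; and `GSW_p(μ,ν) = 0` forces the
slices to agree σ-a.e., hence `μ = ν` by injectivity of the generalized Radon transform. -/

open ProbabilityTheory Metric Filter Set Topology

lemma MeasureTheory.Measure.exists_glue {Y X Z : Type*} [MeasurableSpace Y]
    [MeasurableSpace X] [MeasurableSpace Z] [StandardBorelSpace X] [Nonempty X]
    [StandardBorelSpace Z] [Nonempty Z] (γ : Measure (Y × X)) (η : Measure (Y × Z))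
    [IsFiniteMeasure γ] [IsFiniteMeasure η] (h : γ.fst = η.fst) :
    ∃ ρ : Measure (Y × X × Z),
      ρ.map (fun q => (q.1, q.2.1)) = γ ∧ ρ.map (fun q => (q.1, q.2.2)) = η := by
  refine ⟨γ.fst ⊗ₘ (γ.condKernel ×ₖ η.condKernel), ?_, ?_⟩
  · rw [show (fun q : Y × X × Z => (q.1, q.2.1)) = Prod.map id Prod.fst from rfl,
      ← Measure.compProd_map measurable_fst, ← Kernel.fst_eq, Kernel.fst_prod,
      Measure.disintegrate]
  · rw [show (fun q : Y × X × Z => (q.1, q.2.2)) = Prod.map id Prod.snd from rfl,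
      ← Measure.compProd_map measurable_snd, ← Kernel.snd_eq, Kernel.snd_prod, h,
      Measure.disintegrate]

section Couplings

variable {X : Type*} [MeasurableSpace X]

def couplings (μ ν : Measure X) : Set (Measure (X × X)) :=
  {γ | IsProbabilityMeasure γ ∧ γ.map Prod.fst = μ ∧ γ.map Prod.snd = ν}

lemma map_swap_mem_couplings {μ ν : Measure X} {γ : Measure (X × X)}
    (hγ : γ ∈ couplings μ ν) : γ.map Prod.swap ∈ couplings ν μ := by
  obtain ⟨_, hfst, hsnd⟩ := hγ
  refine ⟨Measure.isProbabilityMeasure_map measurable_swap.aemeasurable, ?_, ?_⟩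
  · rwa [Measure.map_map measurable_fst measurable_swap]
  · rwa [Measure.map_map measurable_snd measurable_swap]

lemma map_diag_mem_couplings (μ : Measure X) [IsProbabilityMeasure μ] :
    μ.map (fun x => (x, x)) ∈ couplings μ μ := by
  have hdiag : Measurable fun x : X => (x, x) := measurable_id.prodMk measurable_id
  refine ⟨Measure.isProbabilityMeasure_map hdiag.aemeasurable, ?_, ?_⟩
  · rw [Measure.map_map measurable_fst hdiag]; exact Measure.map_id
  · rw [Measure.map_map measurable_snd hdiag]; exact Measure.map_id

end Couplings

section Wasserstein

variable {X : Type*} [MeasurableSpace X] [PseudoMetricSpace X] {p : ℝ} {μ ν : Measure X}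

noncomputable def transportCost (p : ℝ) (γ : Measure (X × X)) : ℝ≥0∞ :=
  ∫⁻ q, ENNReal.ofReal (dist q.1 q.2 ^ p) ∂γ

lemma wassersteinDist_eq_rpow_biInf (p : ℝ) (μ ν : Measure X) :
    wassersteinDist p μ ν = (⨅ γ ∈ couplings μ ν, transportCost p γ) ^ (1 / p) := rfl

lemma wassersteinDist_eq_biInf (hp : 0 < p) (μ ν : Measure X) :
    wassersteinDist p μ ν = ⨅ γ ∈ couplings μ ν, transportCost p γ ^ (1 / p) :=
  (orderIsoRpow (1 / p) (by positivity)).map_iInf₂ _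

lemma wassersteinDist_le_of_mem_couplings (hp : 0 < p) {γ : Measure (X × X)}
    (hγ : γ ∈ couplings μ ν) : wassersteinDist p μ ν ≤ transportCost p γ ^ (1 / p) := by
  rw [wassersteinDist_eq_biInf hp]
  exact biInf_le _ hγ

lemma wassersteinDist_eq_zero_iff (hp : 0 < p) :
    wassersteinDist p μ ν = 0 ↔ ⨅ γ ∈ couplings μ ν, transportCost p γ = 0 :=
  rpow_eq_zero_iff_of_pos (by positivity)

variable [OpensMeasurableSpace X]

lemma measure_le_measure_cthickening_add_of_mem_couplings {γ : Measure (X × X)}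
    (hγ : γ ∈ couplings μ ν) {F : Set X} (hF : MeasurableSet F) (δ : ℝ) :
    μ F ≤ ν (cthickening δ F) + γ {q | δ ≤ dist q.1 q.2} := by
  obtain ⟨_, hfst, hsnd⟩ := hγ
  have hsub : Prod.fst ⁻¹' F ⊆ Prod.snd ⁻¹' cthickening δ F ∪ {q : X × X | δ ≤ dist q.1 q.2} := by
    rintro ⟨x, y⟩ hx
    by_cases hxy : δ ≤ dist x y
    · exact Or.inr hxy
    · exact Or.inl (mem_cthickening_of_dist_le y x δ F hx (by rw [dist_comm]; linarith))
  calc μ F = γ (Prod.fst ⁻¹' F) := by rw [← hfst, Measure.map_apply measurable_fst hF]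
    _ ≤ γ (Prod.snd ⁻¹' cthickening δ F) + γ {q | δ ≤ dist q.1 q.2} :=
      (measure_mono hsub).trans (measure_union_le _ _)
    _ = ν (cthickening δ F) + γ {q | δ ≤ dist q.1 q.2} := by
      rw [← hsnd, Measure.map_apply measurable_snd isClosed_cthickening.measurableSet]

variable [SecondCountableTopology X]

lemma transportCost_map {Ω : Type*} [MeasurableSpace Ω] (p : ℝ) (ρ : Measure Ω)
    {π : Ω → X × X} (hπ : Measurable π) :
    transportCost p (ρ.map π) = ∫⁻ ω, ENNReal.ofReal (dist (π ω).1 (π ω).2 ^ p) ∂ρ :=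
  lintegral_map (by fun_prop) hπ

lemma transportCost_map_swap (p : ℝ) (γ : Measure (X × X)) :
    transportCost p (γ.map Prod.swap) = transportCost p γ := by
  rw [transportCost_map p γ measurable_swap]
  simp only [Prod.fst_swap, Prod.snd_swap, dist_comm, transportCost]

lemma wassersteinDist_comm (p : ℝ) (μ ν : Measure X) :
    wassersteinDist p μ ν = wassersteinDist p ν μ := by
  have key : ∀ α β : Measure X,
      ⨅ γ ∈ couplings α β, transportCost p γ ≤ ⨅ γ ∈ couplings β α, transportCost p γ :=
    fun α β => le_iInf₂ fun γ hγ =>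
      (biInf_le _ (map_swap_mem_couplings hγ)).trans_eq (transportCost_map_swap p γ)
  rw [wassersteinDist_eq_rpow_biInf, wassersteinDist_eq_rpow_biInf,
    le_antisymm (key μ ν) (key ν μ)]

lemma wassersteinDist_self (hp : 0 < p) (μ : Measure X) [IsProbabilityMeasure μ] :
    wassersteinDist p μ μ = 0 := by
  have hcost : transportCost p (μ.map fun x => (x, x)) = 0 := by
    simp [transportCost_map p μ (by fun_prop : Measurable fun x : X => (x, x)),
      Real.zero_rpow hp.ne']
  refine le_antisymm ?_ zero_le
  calc wassersteinDist p μ μ ≤ transportCost p (μ.map fun x => (x, x)) ^ (1 / p) :=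
        wassersteinDist_le_of_mem_couplings hp (map_diag_mem_couplings μ)
    _ = 0 := by rw [hcost, zero_rpow_of_pos (by positivity)]

lemma ofReal_rpow_mul_measure_le_transportCost (hp : 0 ≤ p) {δ : ℝ} (hδ : 0 ≤ δ)
    (γ : Measure (X × X)) :
    ENNReal.ofReal (δ ^ p) * γ {q | δ ≤ dist q.1 q.2} ≤ transportCost p γ := by
  have hsub : {q : X × X | δ ≤ dist q.1 q.2} ⊆
      {q | ENNReal.ofReal (δ ^ p) ≤ ENNReal.ofReal (dist q.1 q.2 ^ p)} := fun q hq =>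
    ENNReal.ofReal_le_ofReal (Real.rpow_le_rpow hδ hq hp)
  exact (mul_le_mul_right (measure_mono hsub) _).trans
    (mul_meas_ge_le_lintegral₀ (by fun_prop) _)

lemma measure_le_measure_cthickening_of_wassersteinDist_eq_zero (hp : 0 < p)
    (h : wassersteinDist p μ ν = 0) {F : Set X} (hF : MeasurableSet F) {δ : ℝ} (hδ : 0 < δ) :
    μ F ≤ ν (cthickening δ F) := by
  refine ENNReal.le_of_forall_pos_le_add fun ε hε _ => ?_
  have hc : ENNReal.ofReal (δ ^ p) ≠ 0 := (ENNReal.ofReal_pos.2 (Real.rpow_pos_of_pos hδ p)).ne'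
  have hlt : ⨅ γ ∈ couplings μ ν, transportCost p γ < ENNReal.ofReal (δ ^ p) * ε := by
    rw [(wassersteinDist_eq_zero_iff hp).1 h]
    exact ENNReal.mul_pos hc (by exact_mod_cast hε.ne')
  simp only [iInf_lt_iff] at hlt
  obtain ⟨γ, hγ, hcost⟩ := hlt
  have hfar : γ {q | δ ≤ dist q.1 q.2} ≤ ε :=
    ((ENNReal.mul_lt_mul_iff_right hc ENNReal.ofReal_ne_top).1
      ((ofReal_rpow_mul_measure_le_transportCost hp.le hδ.le γ).trans_lt hcost)).le
  exact (measure_le_measure_cthickening_add_of_mem_couplings hγ hF δ).trans (by gcongr)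

lemma measure_le_of_wassersteinDist_eq_zero [IsFiniteMeasure ν] (hp : 0 < p)
    (h : wassersteinDist p μ ν = 0) {F : Set X} (hF : IsClosed F) : μ F ≤ ν F := by
  have hlim : Tendsto (fun δ => ν (cthickening δ F)) (𝓝[>] 0) (𝓝 (ν F)) :=
    (tendsto_measure_cthickening_of_isClosed ⟨1, one_pos, measure_ne_top ν _⟩ hF).mono_left
      nhdsWithin_le_nhds
  exact ge_of_tendsto hlim (eventually_nhdsWithin_of_forall fun δ hδ =>
    measure_le_measure_cthickening_of_wassersteinDist_eq_zero hp h hF.measurableSet hδ)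

lemma eq_of_wassersteinDist_eq_zero [BorelSpace X] [IsFiniteMeasure μ] [IsFiniteMeasure ν]
    (hp : 0 < p) (h : wassersteinDist p μ ν = 0) : μ = ν := by
  have h' : wassersteinDist p ν μ = 0 := by rwa [wassersteinDist_comm]
  have hclosed : ∀ F : Set X, IsClosed F → μ F = ν F := fun F hF =>
    le_antisymm (measure_le_of_wassersteinDist_eq_zero hp h hF)
      (measure_le_of_wassersteinDist_eq_zero hp h' hF)
  refine ext_of_generate_finite {F : Set X | IsClosed F} ?_ ?_ hclosed (hclosed _ isClosed_univ)
  · rw [BorelSpace.measurable_eq (α := X), borel_eq_generateFrom_isClosed]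
  · exact fun s hs t ht _ => hs.inter ht

lemma wassersteinDist_le_add_of_mem_couplings [StandardBorelSpace X] (hp : 1 ≤ p)
    {μ₁ μ₂ μ₃ : Measure X} {γ η : Measure (X × X)} (hγ : γ ∈ couplings μ₁ μ₂)
    (hη : η ∈ couplings μ₂ μ₃) :
    wassersteinDist p μ₁ μ₃ ≤ transportCost p γ ^ (1 / p) + transportCost p η ^ (1 / p) := by
  have hp0 : 0 < p := by linarith
  obtain ⟨_, hγ₁, hγ₂⟩ := hγ
  obtain ⟨_, hη₂, hη₃⟩ := hη
  have : Nonempty X := (nonempty_of_isProbabilityMeasure γ).map Prod.fst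
  have : IsProbabilityMeasure (γ.map Prod.swap) :=
    Measure.isProbabilityMeasure_map measurable_swap.aemeasurable
  -- `ρ` is the law of `(y, x, z)` where `(x, y) ∼ γ` and `(y, z) ∼ η`
  obtain ⟨ρ, hργ, hρη⟩ := Measure.exists_glue (γ.map Prod.swap) η
    (by rw [Measure.fst_map_swap, Measure.snd, Measure.fst, hγ₂, hη₂])
  have : IsProbabilityMeasure ρ := by
    have : IsProbabilityMeasure (ρ.map fun q => (q.1, q.2.2)) := by rw [hρη]; infer_instance
    exact Measure.isProbabilityMeasure_of_map fun q : X × X × X => (q.1, q.2.2)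
  have hξ : ρ.map Prod.snd ∈ couplings μ₁ μ₃ := by
    refine ⟨Measure.isProbabilityMeasure_map measurable_snd.aemeasurable, ?_, ?_⟩
    · calc (ρ.map Prod.snd).map Prod.fst = (ρ.map fun q => (q.1, q.2.1)).map Prod.snd := by
            rw [Measure.map_map measurable_fst measurable_snd,
              Measure.map_map measurable_snd (by fun_prop)]; rfl
        _ = μ₁ := by rw [hργ, Measure.map_map measurable_snd measurable_swap]; exact hγ₁
    · calc (ρ.map Prod.snd).map Prod.snd = (ρ.map fun q => (q.1, q.2.2)).map Prod.snd := by
            rw [Measure.map_map measurable_snd measurable_snd,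
              Measure.map_map measurable_snd (by fun_prop)]; rfl
        _ = μ₃ := by rw [hρη, hη₃]
  set f : X × X × X → ℝ≥0∞ := fun q => ENNReal.ofReal (dist q.1 q.2.1)
  set g : X × X × X → ℝ≥0∞ := fun q => ENNReal.ofReal (dist q.1 q.2.2)
  calc wassersteinDist p μ₁ μ₃
      ≤ transportCost p (ρ.map Prod.snd) ^ (1 / p) :=
        wassersteinDist_le_of_mem_couplings hp0 hξ
    _ ≤ (∫⁻ q, (f + g) q ^ p ∂ρ) ^ (1 / p) := by
        rw [transportCost_map _ _ measurable_snd]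
        gcongr with q
        rw [← ofReal_rpow_of_nonneg dist_nonneg hp0.le, Pi.add_apply,
          ← ENNReal.ofReal_add dist_nonneg dist_nonneg]
        gcongr
        exact dist_triangle_left _ _ _
    _ ≤ (∫⁻ q, f q ^ p ∂ρ) ^ (1 / p) + (∫⁻ q, g q ^ p ∂ρ) ^ (1 / p) :=
        ENNReal.lintegral_Lp_add_le (by fun_prop) (by fun_prop) hp
    _ = transportCost p γ ^ (1 / p) + transportCost p η ^ (1 / p) := by
        rw [← transportCost_map_swap p γ, ← hργ, ← hρη, transportCost_map _ _ (by fun_prop),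
          transportCost_map _ _ (by fun_prop)]
        simp only [f, g, ofReal_rpow_of_nonneg dist_nonneg hp0.le]

lemma wassersteinDist_triangle [StandardBorelSpace X] (hp : 1 ≤ p) (μ₁ μ₂ μ₃ : Measure X) :
    wassersteinDist p μ₁ μ₃ ≤ wassersteinDist p μ₁ μ₂ + wassersteinDist p μ₂ μ₃ := by
  have hp0 : 0 < p := by linarith
  rw [wassersteinDist_eq_biInf hp0 μ₁ μ₂, wassersteinDist_eq_biInf hp0 μ₂ μ₃]
  simp only [ENNReal.iInf_add, ENNReal.add_iInf]
  exact le_iInf₂ fun η hη => le_iInf₂ fun γ hγ =>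
    wassersteinDist_le_add_of_mem_couplings hp hγ hη

end Wasserstein

section SlicedWasserstein

variable {d : ℕ} {Θ : Type*} [MeasurableSpace Θ] {p : ℝ} {σ : Measure Θ}
  {g : (Fin d → ℝ) → Θ → ℝ}

lemma GSW_comm (μ ν : Measure (Fin d → ℝ)) :
    GSW p σ g μ ν = GSW p σ g ν μ := by
  simp only [GSW, wassersteinDist_comm p (μ.map _)]

lemma GSW_self (hp : 0 < p) (hg : ∀ θ, Measurable fun x => g x θ) (μ : Measure (Fin d → ℝ))
    [IsProbabilityMeasure μ] : GSW p σ g μ μ = 0 := by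
  have hslice : ∀ θ, wassersteinDist p (μ.map fun x => g x θ) (μ.map fun x => g x θ) = 0 :=
    fun θ => by
      have := Measure.isProbabilityMeasure_map (μ := μ) (hg θ).aemeasurable
      exact wassersteinDist_self hp _
  simp [GSW, hslice, zero_rpow_of_pos, hp]

lemma ae_map_eq_of_GSW_eq_zero (hp : 0 < p) (hg : ∀ θ, Measurable fun x => g x θ)
    {μ ν : Measure (Fin d → ℝ)} [IsProbabilityMeasure μ] [IsProbabilityMeasure ν]
    (hW : Measurable fun θ => wassersteinDist p (μ.map fun x => g x θ) (ν.map fun x => g x θ))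
    (h : GSW p σ g μ ν = 0) : ∀ᵐ θ ∂σ, μ.map (fun x => g x θ) = ν.map (fun x => g x θ) := by
  rw [GSW, rpow_eq_zero_iff_of_pos (one_div_pos.2 hp),
    lintegral_eq_zero_iff (hW.pow_const p)] at h
  filter_upwards [h] with θ hθ
  have := Measure.isProbabilityMeasure_map (μ := μ) (hg θ).aemeasurable
  have := Measure.isProbabilityMeasure_map (μ := ν) (hg θ).aemeasurable
  exact eq_of_wassersteinDist_eq_zero hp ((rpow_eq_zero_iff_of_pos hp).1 hθ)

lemma GSW_triangle (hp : 1 ≤ p) {μ₁ μ₂ μ₃ : Measure (Fin d → ℝ)}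
    (h₁₂ : Measurable fun θ => wassersteinDist p (μ₁.map fun x => g x θ) (μ₂.map fun x => g x θ))
    (h₂₃ : Measurable fun θ => wassersteinDist p (μ₂.map fun x => g x θ) (μ₃.map fun x => g x θ)) :
    GSW p σ g μ₁ μ₃ ≤ GSW p σ g μ₁ μ₂ + GSW p σ g μ₂ μ₃ := by
  calc GSW p σ g μ₁ μ₃
      ≤ (∫⁻ θ, ((fun θ => wassersteinDist p (μ₁.map fun x => g x θ) (μ₂.map fun x => g x θ))
          + fun θ => wassersteinDist p (μ₂.map fun x => g x θ) (μ₃.map fun x => g x θ)) θ ^ p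
          ∂σ) ^ (1 / p) := by
        unfold GSW
        gcongr with θ
        exact wassersteinDist_triangle hp _ _ _
    _ ≤ GSW p σ g μ₁ μ₂ + GSW p σ g μ₂ μ₃ :=
        ENNReal.lintegral_Lp_add_le h₁₂.aemeasurable h₂₃.aemeasurable hp

end SlicedWasserstein

theorem GSW_metric_general {d : ℕ} {Θ : Type*} [MeasurableSpace Θ]
    (p : ℝ) (hp : 1 ≤ p)
    (σ : Measure Θ)
    (g : (Fin d → ℝ) → Θ → ℝ) (hg : Measurable (Function.uncurry g))
    (hinj : ∀ μ ν : Measure (Fin d → ℝ), IsProbabilityMeasure μ → IsProbabilityMeasure ν →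
      (∀ᵐ θ ∂σ, μ.map (fun x => g x θ) = ν.map (fun x => g x θ)) → μ = ν)
    (hmeas : ∀ μ ν : Measure (Fin d → ℝ), IsProbabilityMeasure μ → IsProbabilityMeasure ν →
      (∀ θ : Θ, ∫⁻ x, ENNReal.ofReal (|g x θ| ^ p) ∂μ < ∞) →
      (∀ θ : Θ, ∫⁻ x, ENNReal.ofReal (|g x θ| ^ p) ∂ν < ∞) →
      Measurable fun θ : Θ =>
        wassersteinDist p (μ.map fun x => g x θ) (ν.map fun x => g x θ)) :
    (∀ μ ν : Measure (Fin d → ℝ), IsProbabilityMeasure μ → IsProbabilityMeasure ν →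
      (∀ θ : Θ, ∫⁻ x, ENNReal.ofReal (|g x θ| ^ p) ∂μ < ∞) →
      (∀ θ : Θ, ∫⁻ x, ENNReal.ofReal (|g x θ| ^ p) ∂ν < ∞) →
      0 ≤ GSW p σ g μ ν ∧ GSW p σ g μ ν = GSW p σ g ν μ ∧
        (GSW p σ g μ ν = 0 ↔ μ = ν)) ∧
    (∀ μ₁ μ₂ μ₃ : Measure (Fin d → ℝ),
      IsProbabilityMeasure μ₁ → IsProbabilityMeasure μ₂ → IsProbabilityMeasure μ₃ →
      (∀ θ : Θ, ∫⁻ x, ENNReal.ofReal (|g x θ| ^ p) ∂μ₁ < ∞) →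
      (∀ θ : Θ, ∫⁻ x, ENNReal.ofReal (|g x θ| ^ p) ∂μ₂ < ∞) →
      (∀ θ : Θ, ∫⁻ x, ENNReal.ofReal (|g x θ| ^ p) ∂μ₃ < ∞) →
      GSW p σ g μ₁ μ₃ ≤ GSW p σ g μ₁ μ₂ + GSW p σ g μ₂ μ₃) := by
  have hp0 : 0 < p := by linarith
  have hslice : ∀ θ, Measurable fun x => g x θ := fun _ => hg.of_uncurry_right
  refine ⟨fun μ ν hμ hν hμp hνp => ⟨zero_le, GSW_comm μ ν, ?_⟩,
    fun μ₁ μ₂ μ₃ h₁ h₂ h₃ h₁p h₂p h₃p =>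
      GSW_triangle hp (hmeas μ₁ μ₂ h₁ h₂ h₁p h₂p) (hmeas μ₂ μ₃ h₂ h₃ h₂p h₃p)⟩
  refine ⟨fun h => hinj μ ν hμ hν ?_, fun h => h ▸ GSW_self hp0 hslice μ⟩
  exact ae_map_eq_of_GSW_eq_zero hp0 hslice (hmeas μ ν hμ hν hμp hνp) h

/-- If the generalized Radon transform associated with `g` is injective on probability
measures, then the generalized sliced `p`-Wasserstein distance is a metric on the set of
Borel probability measures on `ℝ^d` with finite `p`-th moment under every slice: it is
non-negative, symmetric, satisfies the triangle inequality, and vanishes exactly on the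
diagonal. -/
theorem GSW_metric {d : ℕ} {Θ : Type*} [MeasurableSpace Θ]
    (p : ℝ) (hp : 1 ≤ p)
    (σ : Measure Θ) [IsFiniteMeasure σ] (hσ : σ ≠ 0)
    (g : (Fin d → ℝ) → Θ → ℝ) (hg : Measurable (Function.uncurry g))
    (hinj : ∀ μ ν : Measure (Fin d → ℝ), IsProbabilityMeasure μ → IsProbabilityMeasure ν →
      (∀ᵐ θ ∂σ, μ.map (fun x => g x θ) = ν.map (fun x => g x θ)) → μ = ν)
    (hmeas : ∀ μ ν : Measure (Fin d → ℝ), IsProbabilityMeasure μ → IsProbabilityMeasure ν →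
      (∀ θ : Θ, ∫⁻ x, ENNReal.ofReal (|g x θ| ^ p) ∂μ < ∞) →
      (∀ θ : Θ, ∫⁻ x, ENNReal.ofReal (|g x θ| ^ p) ∂ν < ∞) →
      Measurable fun θ : Θ =>
        wassersteinDist p (μ.map fun x => g x θ) (ν.map fun x => g x θ)) :
    (∀ μ ν : Measure (Fin d → ℝ), IsProbabilityMeasure μ → IsProbabilityMeasure ν →
      (∀ θ : Θ, ∫⁻ x, ENNReal.ofReal (|g x θ| ^ p) ∂μ < ∞) →
      (∀ θ : Θ, ∫⁻ x, ENNReal.ofReal (|g x θ| ^ p) ∂ν < ∞) →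
      0 ≤ GSW p σ g μ ν ∧ GSW p σ g μ ν = GSW p σ g ν μ ∧
        (GSW p σ g μ ν = 0 ↔ μ = ν)) ∧
    (∀ μ₁ μ₂ μ₃ : Measure (Fin d → ℝ),
      IsProbabilityMeasure μ₁ → IsProbabilityMeasure μ₂ → IsProbabilityMeasure μ₃ →
      (∀ θ : Θ, ∫⁻ x, ENNReal.ofReal (|g x θ| ^ p) ∂μ₁ < ∞) →
      (∀ θ : Θ, ∫⁻ x, ENNReal.ofReal (|g x θ| ^ p) ∂μ₂ < ∞) →
      (∀ θ : Θ, ∫⁻ x, ENNReal.ofReal (|g x θ| ^ p) ∂μ₃ < ∞) →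
      GSW p σ g μ₁ μ₃ ≤ GSW p σ g μ₁ μ₂ + GSW p σ g μ₂ μ₃) :=
  GSW_metric_general p hp σ g hg hinj hmeas
end

section
/- Closed-form quantile formula for the one-dimensional p-Wasserstein distance: for p ∈ [1,∞) and Borel probability measures μ, ν on ℝ with finite p-th moment, W_p(μ,ν)^p = ∫₀¹ |F_μ⁻¹(z) − F_ν⁻¹(z)|^p dz, where F_μ and F_ν are the cumulative distribution functions of μ and ν and F⁻¹(z) = inf{x ∈ ℝ : F(x) ≥ z} denotes the generalized inverse (quantile function). -/
/-!
The cost splits as `|x - y|^p = (y - x)₊^p + (x - y)₊^p`, and a layer-cake formula writes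
`(y - x)₊^p = (λ ⊗ ρ) {(t, v) | x < t, t + v ≤ y}`, where `λ` is Lebesgue measure and `ρ` the
Stieltjes measure of `v ↦ p v₊^(p-1)`. By Tonelli, the one-sided cost of a coupling `γ` of `μ` and
`ν` is the `λ ⊗ ρ`-integral of `γ ((-∞, t) × [t + v, ∞))`, and each such mass is at least
`μ (-∞, t) - ν (-∞, t + v)`. The quantile coupling, the image of Lebesgue measure on `(0, 1)`
under `z ↦ (F_μ⁻¹ z, F_ν⁻¹ z)`, attains all these bounds, so it is an optimal coupling, and its
cost is the quantile integral.
-/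

open MeasureTheory ENNReal

/-- The quantile function (generalized inverse of the cumulative distribution function
`F_μ(x) = μ((-∞, x])`) of a measure `μ` on `ℝ`. -/
noncomputable def quantile (μ : Measure ℝ) (z : ℝ) : ℝ :=
  sInf {x : ℝ | z ≤ (μ (Set.Iic x)).toReal}

open Set Filter ProbabilityTheory Function
open scoped Topology

lemma volume_eq_of_Ioo_subset_of_subset_Icc {s : Set ℝ} {a b : ℝ}
    (h₁ : Ioo a b ⊆ s) (h₂ : s ⊆ Icc a b) : volume s = ENNReal.ofReal (b - a) :=
  le_antisymm ((measure_mono h₂).trans_eq Real.volume_Icc)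
    (Real.volume_Ioo.symm.trans_le (measure_mono h₁))

lemma lintegral_measure_preimage_prodMk_comm {α β : Type*} [MeasurableSpace α]
    [MeasurableSpace β] (μ : Measure α) (ν : Measure β) [SFinite μ] [SFinite ν]
    {s : Set (α × β)} (hs : MeasurableSet s) :
    ∫⁻ a, ν (Prod.mk a ⁻¹' s) ∂μ = ∫⁻ b, μ ((·, b) ⁻¹' s) ∂ν := by
  rw [← Measure.prod_apply hs, Measure.prod_apply_symm hs]

lemma MeasureTheory.Measure.map_fst_sub_map_snd_le_prod_compl {α β : Type*} [MeasurableSpace α]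
    [MeasurableSpace β] (γ : Measure (α × β)) {s : Set α} {t : Set β}
    (hs : MeasurableSet s) (ht : MeasurableSet t) :
    γ.map Prod.fst s - γ.map Prod.snd t ≤ γ (s ×ˢ tᶜ) := by
  rw [Measure.map_apply measurable_fst hs, Measure.map_apply measurable_snd ht,
    Set.prod_eq, preimage_compl, ← sdiff_eq]
  exact le_measure_sdiff

section Quantile

variable (μ : Measure ℝ)

lemma leftLim_cdf_mem_Icc (t : ℝ) : leftLim (cdf μ) t ∈ Icc 0 1 :=
  ⟨(cdf_nonneg μ _).trans ((monotone_cdf μ).le_leftLim (sub_one_lt t)),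
    ((monotone_cdf μ).leftLim_le le_rfl).trans (cdf_le_one μ t)⟩

variable [IsProbabilityMeasure μ]

lemma quantile_le_iff {z : ℝ} (hz : z ∈ Ioo 0 1) {x : ℝ} :
    quantile μ z ≤ x ↔ z ≤ cdf μ x := by
  set S := {x : ℝ | z ≤ cdf μ x}
  have hquantile : quantile μ z = sInf S := by
    simp [quantile, S, cdf_eq_real, measureReal_def]
  have hne : S.Nonempty :=
    (((tendsto_cdf_atTop μ).eventually (eventually_gt_nhds hz.2)).exists).imp fun _ ↦ le_of_lt
  have hbdd : BddBelow S := by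
    obtain ⟨x₀, hx₀⟩ := ((tendsto_cdf_atBot μ).eventually (eventually_lt_nhds hz.1)).exists
    exact ⟨x₀, fun x hx ↦ le_of_not_gt fun hlt ↦ (hx.trans (monotone_cdf μ hlt.le)).not_gt hx₀⟩
  have hmem : sInf S ∈ S := by
    refine ge_of_tendsto (((cdf μ).right_continuous _).mono Ioi_subset_Ici_self)
      (eventually_nhdsWithin_of_forall fun x hx ↦ ?_)
    obtain ⟨y, hy, hyx⟩ := exists_lt_of_csInf_lt hne hx
    exact hy.trans (monotone_cdf μ hyx.le)
  rw [hquantile]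
  exact ⟨fun h ↦ hmem.trans (monotone_cdf μ h), fun h ↦ csInf_le hbdd h⟩

lemma monotoneOn_quantile : MonotoneOn (quantile μ) (Ioo 0 1) :=
  fun _ ha _ hb hab ↦ (quantile_le_iff μ ha).2 (hab.trans ((quantile_le_iff μ hb).1 le_rfl))

lemma aemeasurable_quantile : AEMeasurable (quantile μ) (volume.restrict (Ioo 0 1)) :=
  aemeasurable_restrict_of_monotoneOn measurableSet_Ioo (monotoneOn_quantile μ)

lemma measure_Iio_eq_ofReal_leftLim_cdf (t : ℝ) :
    μ (Iio t) = ENNReal.ofReal (leftLim (cdf μ) t) := by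
  conv_lhs => rw [← measure_cdf μ]
  rw [StieltjesFunction.measure_Iio _ (tendsto_cdf_atBot μ), sub_zero]

lemma le_leftLim_cdf_of_quantile_lt {z t : ℝ} (hz : z ∈ Ioo 0 1) (h : quantile μ z < t) :
    z ≤ leftLim (cdf μ) t :=
  ((quantile_le_iff μ hz).1 le_rfl).trans ((monotone_cdf μ).le_leftLim h)

lemma quantile_lt_of_lt_leftLim_cdf {z t : ℝ} (hz : z ∈ Ioo 0 1) (h : z < leftLim (cdf μ) t) :
    quantile μ z < t := by
  obtain ⟨x, hzx, hxt⟩ :=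
    (((monotone_cdf μ).tendsto_leftLim t).eventually (eventually_gt_nhds h)
      |>.and self_mem_nhdsWithin).exists
  exact ((quantile_le_iff μ hz).2 hzx.le).trans_lt hxt

instance : IsProbabilityMeasure (volume.restrict (Ioo (0 : ℝ) 1)) :=
  ⟨by simp [Real.volume_Ioo]⟩

lemma map_quantile : (volume.restrict (Ioo 0 1)).map (quantile μ) = μ := by
  have : IsProbabilityMeasure ((volume.restrict (Ioo 0 1)).map (quantile μ)) :=
    Measure.isProbabilityMeasure_map (aemeasurable_quantile μ)
  refine Measure.ext_of_Iic _ _ fun x ↦ ?_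
  rw [Measure.map_apply_of_aemeasurable (aemeasurable_quantile μ) measurableSet_Iic,
    Measure.restrict_apply' measurableSet_Ioo, ← ofReal_cdf, ← sub_zero (cdf μ x)]
  refine volume_eq_of_Ioo_subset_of_subset_Icc (fun z hz ↦ ?_) fun z ⟨hzx, hz⟩ ↦ ?_
  · have hz01 : z ∈ Ioo 0 1 := ⟨hz.1, hz.2.trans_le (cdf_le_one μ x)⟩
    exact ⟨(quantile_le_iff μ hz01).2 hz.2.le, hz01⟩
  · exact ⟨hz.1.le, (quantile_le_iff μ hz).1 hzx⟩

end Quantile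

section LayerCake

-- For `p = 1` this is the indicator of `[0, ∞)` (since `0 ^ 0 = 1`), whose measure is `δ₀`.
noncomputable def rpowDerivStieltjes (p : ℝ) (hp : 1 ≤ p) : StieltjesFunction ℝ where
  toFun u := if 0 ≤ u then p * u ^ (p - 1) else 0
  mono' u v huv := by
    dsimp only
    have : 0 ≤ p := by linarith
    split_ifs with hu hv hv
    · gcongr
    · exact absurd (hu.trans huv) hv
    · positivity
    · rfl
  right_continuous' x := by
    rcases lt_or_ge x 0 with hx | hx
    · refine ((continuousAt_const (y := (0 : ℝ))).congr ?_).continuousWithinAt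
      filter_upwards [Iio_mem_nhds hx] with u hu
      simp [not_le.2 (mem_Iio.1 hu)]
    · refine (((continuous_const (y := p)).mul (Real.continuous_rpow_const (sub_nonneg.2 hp))
        ).continuousWithinAt (x := x) (s := Ici x)).congr (fun u hu ↦ ?_) ?_
      · simp [hx.trans hu]
      · simp [hx]

variable {p : ℝ}

lemma rpowDerivStieltjes_apply (hp : 1 ≤ p) (u : ℝ) :
    rpowDerivStieltjes p hp u = if 0 ≤ u then p * u ^ (p - 1) else 0 := rfl

lemma rpowDerivStieltjes_measure_Iic (hp : 1 ≤ p) (u : ℝ) :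
    (rpowDerivStieltjes p hp).measure (Iic u) = ENNReal.ofReal (rpowDerivStieltjes p hp u) := by
  have hbot : Tendsto (rpowDerivStieltjes p hp) atBot (𝓝 0) :=
    tendsto_const_nhds.congr' <| (eventually_lt_atBot 0).mono fun u hu ↦ by
      simp [rpowDerivStieltjes_apply, hu.not_ge]
  rw [StieltjesFunction.measure_Iic _ hbot, sub_zero]

lemma integral_Ioc_mul_sub_rpow (hp : 1 ≤ p) {x y : ℝ} (hxy : x ≤ y) :
    ∫ t in Ioc x y, p * (y - t) ^ (p - 1) = (y - x) ^ p := by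
  rw [← intervalIntegral.integral_of_le hxy, intervalIntegral.integral_const_mul,
    intervalIntegral.integral_comp_sub_left (fun u ↦ u ^ (p - 1)) y, sub_self,
    integral_rpow (Or.inl (by linarith)), sub_add_cancel, Real.zero_rpow (by linarith), sub_zero]
  field_simp

lemma volume_prod_rpowDerivStieltjes_setOf (hp : 1 ≤ p) (x y : ℝ) :
    (volume.prod (rpowDerivStieltjes p hp).measure) {w | x < w.1 ∧ w.1 + w.2 ≤ y}
      = ENNReal.ofReal (max (y - x) 0 ^ p) := by
  have hS : MeasurableSet {w : ℝ × ℝ | x < w.1 ∧ w.1 + w.2 ≤ y} :=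
    (measurableSet_lt measurable_const measurable_fst).inter
      (measurableSet_le (measurable_fst.add measurable_snd) measurable_const)
  have hsection (t : ℝ) :
      (rpowDerivStieltjes p hp).measure (Prod.mk t ⁻¹' {w | x < w.1 ∧ w.1 + w.2 ≤ y})
        = (Ioc x y).indicator (fun t ↦ ENNReal.ofReal (p * (y - t) ^ (p - 1))) t := by
    by_cases hxt : x < t
    · have : Prod.mk t ⁻¹' {w : ℝ × ℝ | x < w.1 ∧ w.1 + w.2 ≤ y} = Iic (y - t) := by
        ext v
        simp [hxt, le_sub_iff_add_le']
      by_cases hty : t ≤ y <;>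
        simp [this, rpowDerivStieltjes_measure_Iic, rpowDerivStieltjes_apply, hxt, hty]
    · simp [hxt]
  rw [Measure.prod_apply hS, lintegral_congr hsection, lintegral_indicator measurableSet_Ioc]
  rcases le_total x y with hxy | hyx
  · have hint : IntegrableOn (fun t ↦ p * (y - t) ^ (p - 1)) (Ioc x y) :=
      (((continuous_const.sub continuous_id).rpow_const fun _ ↦ Or.inr (sub_nonneg.2 hp)).const_mul
        p).integrableOn_Icc.mono_set Ioc_subset_Icc_self
    have hnonneg : 0 ≤ᵐ[volume.restrict (Ioc x y)] fun t ↦ p * (y - t) ^ (p - 1) :=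
      (ae_restrict_iff' measurableSet_Ioc).2 <| ae_of_all _ fun t ht ↦
        mul_nonneg (by linarith) (Real.rpow_nonneg (sub_nonneg.2 ht.2) _)
    rw [← ofReal_integral_eq_lintegral_ofReal hint hnonneg, integral_Ioc_mul_sub_rpow hp hxy,
      max_eq_left (sub_nonneg.2 hxy)]
  · simp [hyx, Real.zero_rpow (by linarith : p ≠ 0)]

lemma lintegral_ofReal_max_sub_rpow (hp : 1 ≤ p) (γ : Measure (ℝ × ℝ)) [SFinite γ] :
    ∫⁻ q, ENNReal.ofReal (max (q.2 - q.1) 0 ^ p) ∂γ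
      = ∫⁻ w, γ (Iio w.1 ×ˢ Ici (w.1 + w.2)) ∂(volume.prod (rpowDerivStieltjes p hp).measure) := by
  have hD : MeasurableSet {r : (ℝ × ℝ) × ℝ × ℝ | r.1.1 < r.2.1 ∧ r.2.1 + r.2.2 ≤ r.1.2} :=
    (measurableSet_lt measurable_fst.fst measurable_snd.fst).inter
      (measurableSet_le (measurable_snd.fst.add measurable_snd.snd) measurable_fst.snd)
  simp_rw [← volume_prod_rpowDerivStieltjes_setOf hp]
  exact lintegral_measure_preimage_prodMk_comm γ _ hD

end LayerCake

lemma ofReal_abs_sub_rpow {p : ℝ} (hp : 0 < p) (x y : ℝ) :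
    ENNReal.ofReal (|x - y| ^ p)
      = ENNReal.ofReal (max (y - x) 0 ^ p) + ENNReal.ofReal (max (x - y) 0 ^ p) := by
  rcases le_total x y with h | h
  · simp [abs_of_nonpos (sub_nonpos.2 h), h, Real.zero_rpow hp.ne']
  · simp [abs_of_nonneg (sub_nonneg.2 h), h, Real.zero_rpow hp.ne']

lemma measurable_ofReal_max_sub_rpow (p : ℝ) :
    Measurable fun q : ℝ × ℝ ↦ ENNReal.ofReal (max (q.2 - q.1) 0 ^ p) := by
  fun_prop

section QuantileCoupling

noncomputable def quantileCoupling (μ ν : Measure ℝ) : Measure (ℝ × ℝ) :=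
  (volume.restrict (Ioo 0 1)).map fun z ↦ (quantile μ z, quantile ν z)

variable (μ ν : Measure ℝ) [IsProbabilityMeasure μ] [IsProbabilityMeasure ν]

lemma aemeasurable_quantile_prod :
    AEMeasurable (fun z ↦ (quantile μ z, quantile ν z)) (volume.restrict (Ioo 0 1)) :=
  (aemeasurable_quantile μ).prodMk (aemeasurable_quantile ν)

instance : IsProbabilityMeasure (quantileCoupling μ ν) :=
  Measure.isProbabilityMeasure_map (aemeasurable_quantile_prod μ ν)

lemma map_fst_quantileCoupling : (quantileCoupling μ ν).map Prod.fst = μ := by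
  rw [quantileCoupling, AEMeasurable.map_map_of_aemeasurable measurable_fst.aemeasurable
    (aemeasurable_quantile_prod μ ν)]
  exact map_quantile μ

lemma map_snd_quantileCoupling : (quantileCoupling μ ν).map Prod.snd = ν := by
  rw [quantileCoupling, AEMeasurable.map_map_of_aemeasurable measurable_snd.aemeasurable
    (aemeasurable_quantile_prod μ ν)]
  exact map_quantile ν

lemma map_swap_quantileCoupling : (quantileCoupling μ ν).map Prod.swap = quantileCoupling ν μ := by
  rw [quantileCoupling, AEMeasurable.map_map_of_aemeasurable measurable_swap.aemeasurable
    (aemeasurable_quantile_prod μ ν)]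
  rfl

lemma lintegral_quantileCoupling {f : ℝ × ℝ → ℝ≥0∞} (hf : Measurable f) :
    ∫⁻ q, f q ∂quantileCoupling μ ν = ∫⁻ z in Ioo 0 1, f (quantile μ z, quantile ν z) :=
  lintegral_map' hf.aemeasurable (aemeasurable_quantile_prod μ ν)

lemma quantileCoupling_Iio_prod_Ici (t u : ℝ) :
    quantileCoupling μ ν (Iio t ×ˢ Ici u) = μ (Iio t) - ν (Iio u) := by
  obtain ⟨ha₀, ha₁⟩ := leftLim_cdf_mem_Icc μ t
  obtain ⟨hb₀, hb₁⟩ := leftLim_cdf_mem_Icc ν u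
  rw [quantileCoupling, Measure.map_apply_of_aemeasurable (aemeasurable_quantile_prod μ ν)
    (measurableSet_Iio.prod measurableSet_Ici), Measure.restrict_apply' measurableSet_Ioo,
    measure_Iio_eq_ofReal_leftLim_cdf μ, measure_Iio_eq_ofReal_leftLim_cdf ν, ← ofReal_sub _ hb₀]
  refine volume_eq_of_Ioo_subset_of_subset_Icc (fun z hz ↦ ?_) fun z ⟨⟨hzt, hzu⟩, hz⟩ ↦ ?_
  · have hz01 : z ∈ Ioo 0 1 := ⟨hb₀.trans_lt hz.1, hz.2.trans_le ha₁⟩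
    exact ⟨⟨quantile_lt_of_lt_leftLim_cdf μ hz01 hz.2,
      le_of_not_gt fun h ↦ (le_leftLim_cdf_of_quantile_lt ν hz01 h).not_gt hz.1⟩, hz01⟩
  · exact ⟨le_of_not_gt fun h ↦ (quantile_lt_of_lt_leftLim_cdf ν hz h).not_ge hzu,
      le_leftLim_cdf_of_quantile_lt μ hz hzt⟩

variable {μ ν} {p : ℝ}

lemma lintegral_max_sub_rpow_quantileCoupling_le (hp : 1 ≤ p) {γ : Measure (ℝ × ℝ)} [SFinite γ]
    (hγ₁ : γ.map Prod.fst = μ) (hγ₂ : γ.map Prod.snd = ν) :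
    ∫⁻ q, ENNReal.ofReal (max (q.2 - q.1) 0 ^ p) ∂quantileCoupling μ ν
      ≤ ∫⁻ q, ENNReal.ofReal (max (q.2 - q.1) 0 ^ p) ∂γ := by
  rw [lintegral_ofReal_max_sub_rpow hp, lintegral_ofReal_max_sub_rpow hp]
  refine lintegral_mono fun w ↦ ?_
  rw [quantileCoupling_Iio_prod_Ici, ← compl_Iio, ← hγ₁, ← hγ₂]
  exact Measure.map_fst_sub_map_snd_le_prod_compl γ measurableSet_Iio measurableSet_Iio

lemma lintegral_abs_sub_rpow_quantileCoupling_le (hp : 1 ≤ p) {γ : Measure (ℝ × ℝ)} [SFinite γ]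
    (hγ₁ : γ.map Prod.fst = μ) (hγ₂ : γ.map Prod.snd = ν) :
    ∫⁻ q, ENNReal.ofReal (|q.1 - q.2| ^ p) ∂quantileCoupling μ ν
      ≤ ∫⁻ q, ENNReal.ofReal (|q.1 - q.2| ^ p) ∂γ := by
  have hsplit (γ : Measure (ℝ × ℝ)) : ∫⁻ q, ENNReal.ofReal (|q.1 - q.2| ^ p) ∂γ
      = ∫⁻ q, ENNReal.ofReal (max (q.2 - q.1) 0 ^ p) ∂γ
        + ∫⁻ q, ENNReal.ofReal (max (q.2 - q.1) 0 ^ p) ∂γ.map Prod.swap := by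
    rw [lintegral_map (measurable_ofReal_max_sub_rpow p) measurable_swap,
      ← lintegral_add_left (measurable_ofReal_max_sub_rpow p)]
    simp_rw [ofReal_abs_sub_rpow (by linarith : 0 < p)]
    rfl
  rw [hsplit, hsplit, map_swap_quantileCoupling]
  have hswap₁ : (γ.map Prod.swap).map Prod.fst = ν := by
    rw [Measure.map_map measurable_fst measurable_swap]
    exact hγ₂
  have hswap₂ : (γ.map Prod.swap).map Prod.snd = μ := by
    rw [Measure.map_map measurable_snd measurable_swap]
    exact hγ₁
  exact add_le_add (lintegral_max_sub_rpow_quantileCoupling_le hp hγ₁ hγ₂)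
    (lintegral_max_sub_rpow_quantileCoupling_le hp hswap₁ hswap₂)

end QuantileCoupling

theorem wasserstein_one_dim_quantile_formula_general
    (p : ℝ) (hp : 1 ≤ p) (μ ν : Measure ℝ)
    [IsProbabilityMeasure μ] [IsProbabilityMeasure ν] :
    wassersteinDist p μ ν ^ p
      = ∫⁻ z in Set.Ioo (0 : ℝ) 1,
          ENNReal.ofReal (|quantile μ z - quantile ν z| ^ p) := by
  have hcost (γ : Measure (ℝ × ℝ)) : ∫⁻ q, ENNReal.ofReal (dist q.1 q.2 ^ p) ∂γ
      = ∫⁻ q, ENNReal.ofReal (|q.1 - q.2| ^ p) ∂γ := by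
    simp_rw [Real.dist_eq]
  have hmin : (⨅ γ ∈ {γ : Measure (ℝ × ℝ) | IsProbabilityMeasure γ ∧
      γ.map Prod.fst = μ ∧ γ.map Prod.snd = ν}, ∫⁻ q, ENNReal.ofReal (dist q.1 q.2 ^ p) ∂γ)
        = ∫⁻ q, ENNReal.ofReal (|q.1 - q.2| ^ p) ∂quantileCoupling μ ν := by
    simp_rw [hcost]
    exact le_antisymm
      (iInf₂_le _ ⟨inferInstance, map_fst_quantileCoupling μ ν, map_snd_quantileCoupling μ ν⟩)
      (le_iInf₂ fun γ ⟨_, hγ₁, hγ₂⟩ ↦ lintegral_abs_sub_rpow_quantileCoupling_le hp hγ₁ hγ₂)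
  rw [wassersteinDist, hmin, ← ENNReal.rpow_mul, one_div, inv_mul_cancel₀ (by linarith),
    ENNReal.rpow_one, lintegral_quantileCoupling μ ν (by fun_prop)]

/-- Closed-form quantile formula for the one-dimensional `p`-Wasserstein distance. -/
theorem wasserstein_one_dim_quantile_formula
    (p : ℝ) (hp : 1 ≤ p) (μ ν : Measure ℝ)
    [IsProbabilityMeasure μ] [IsProbabilityMeasure ν]
    (hμ : ∫⁻ x, ENNReal.ofReal (|x| ^ p) ∂μ < ∞)
    (hν : ∫⁻ x, ENNReal.ofReal (|x| ^ p) ∂ν < ∞) :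
    wassersteinDist p μ ν ^ p
      = ∫⁻ z in Set.Ioo (0 : ℝ) 1,
          ENNReal.ofReal (|quantile μ z - quantile ν z| ^ p) :=
  wasserstein_one_dim_quantile_formula_general p hp μ ν
end

section
/- Sorted-samples formula for the p-Wasserstein distance between empirical measures: for p ∈ [1,∞) and real numbers x₁ ≤ x₂ ≤ … ≤ x_N and y₁ ≤ y₂ ≤ … ≤ y_N, the p-Wasserstein distance between the empirical measures μ = (1/N)∑ₙ δ_{xₙ} and ν = (1/N)∑ₙ δ_{yₙ} satisfies W_p(μ,ν)^p = (1/N)∑ₙ |xₙ − yₙ|^p. -/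
/-!
The sorted pairing `xₙ ↦ yₙ` is an optimal coupling, certified by Kantorovich potentials.
Convexity of `t ↦ |t| ^ p` gives the Monge inequality
`c a' b' + c a b ≤ c a b' + c a' b` for `a ≤ a'`, `b ≤ b'` and `c a b = |a - b| ^ p`.
Along sorted samples it lets one telescope the increments of `c` into potentials `φ`, `ψ` with
`φ a + ψ b ≤ c a b` on the support of `μ` and equality at the pairs `(xₙ, yₙ)`; integrating this
against any coupling of `μ` and `ν` bounds its cost below by the cost of the sorted pairing.
-/

open MeasureTheory ENNReal

open Set

theorem wassersteinDist_rpow {X : Type*} [MeasurableSpace X] [PseudoMetricSpace X] {p : ℝ}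
    (hp : p ≠ 0) (μ ν : Measure X) :
    wassersteinDist p μ ν ^ p = ⨅ γ ∈ {γ : Measure (X × X) | IsProbabilityMeasure γ ∧
      γ.map Prod.fst = μ ∧ γ.map Prod.snd = ν}, ∫⁻ q, ENNReal.ofReal (dist q.1 q.2 ^ p) ∂γ := by
  rw [wassersteinDist, ← ENNReal.rpow_mul, one_div_mul_cancel hp, ENNReal.rpow_one]

section Potentials

variable {α β ι : Type*}

/-- `φ` and `ψ` are `c`-transforms, so they are well defined even when samples repeat. -/
theorem exists_dual_potentials [Fintype ι] [Nonempty ι] {x : ι → α} {y : ι → β}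
    {c : α → β → ℝ} {v : ι → ℝ} (hv : ∀ n m, c (x n) (y n) - v n ≤ c (x n) (y m) - v m) :
    ∃ (φ : α → ℝ) (ψ : β → ℝ),
      (∀ n b, φ (x n) + ψ b ≤ c (x n) b) ∧ ∀ n, φ (x n) + ψ (y n) = c (x n) (y n) := by
  set φ : α → ℝ := fun a => ⨅ m, (c a (y m) - v m)
  have hφ_le : ∀ a m, φ a ≤ c a (y m) - v m := fun a m =>
    ciInf_le (finite_range _).bddBelow m
  have hφ_diag : ∀ n, φ (x n) = c (x n) (y n) - v n := fun n =>
    le_antisymm (hφ_le _ n) (le_ciInf (hv n))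
  set ψ : β → ℝ := fun b => ⨅ n, (c (x n) b - φ (x n))
  have hle : ∀ n b, φ (x n) + ψ b ≤ c (x n) b := fun n b => by
    linarith [ciInf_le (finite_range fun k => c (x k) b - φ (x k)).bddBelow n]
  refine ⟨φ, ψ, hle, fun n => (hle n (y n)).antisymm ?_⟩
  rw [← sub_le_iff_le_add']
  refine le_ciInf fun k => ?_
  linarith [hφ_diag n, hφ_le (x k) n]

end Potentials

section Monge

variable {α β : Type*} [Preorder α] [Preorder β]

def IsMonge (c : α → β → ℝ) : Prop :=
  ∀ ⦃a a' : α⦄ ⦃b b' : β⦄, a ≤ a' → b ≤ b' → c a' b' + c a b ≤ c a b' + c a' b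

/-- `v` telescopes the increments of `c` along the diagonal; the Monge inequality makes
`m ↦ c (x n) (y m) - v m` decrease up to `n` and increase after it. -/
theorem IsMonge.exists_potential {c : α → β → ℝ} (hc : IsMonge c) {x : ℕ → α} {y : ℕ → β}
    (hx : Monotone x) (hy : Monotone y) :
    ∃ v : ℕ → ℝ, ∀ n m, c (x n) (y n) - v n ≤ c (x n) (y m) - v m := by
  refine ⟨fun m => ∑ k ∈ Finset.range m, (c (x (k + 1)) (y (k + 1)) - c (x (k + 1)) (y k)),
    fun n m => ?_⟩
  set f : ℕ → ℝ := fun m =>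
    c (x n) (y m) - ∑ k ∈ Finset.range m, (c (x (k + 1)) (y (k + 1)) - c (x (k + 1)) (y k))
  have hf_succ : ∀ k, f (k + 1) - f k = (c (x n) (y (k + 1)) - c (x n) (y k)) -
      (c (x (k + 1)) (y (k + 1)) - c (x (k + 1)) (y k)) := fun k => by
    simp only [f, Finset.sum_range_succ]; ring
  change f n ≤ f m
  rcases le_total n m with hnm | hmn
  · refine Nat.rel_of_forall_rel_succ_of_le_of_le (· ≤ ·) (fun k hk => ?_) le_rfl hnm
    linarith [hf_succ k, hc (hx (by omega : n ≤ k + 1)) (hy k.le_succ)]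
  · refine Nat.decreasingInduction (motive := fun m _ => f n ≤ f m) (fun k hk ih => ?_) le_rfl hmn
    linarith [hf_succ k, hc (hx (by omega : k + 1 ≤ n)) (hy k.le_succ)]

theorem IsMonge.exists_potential_fin {c : α → β → ℝ} (hc : IsMonge c) {N : ℕ} [NeZero N]
    {x : Fin N → α} {y : Fin N → β} (hx : Monotone x) (hy : Monotone y) :
    ∃ v : Fin N → ℝ, ∀ n m, c (x n) (y n) - v n ≤ c (x n) (y m) - v m := by
  have hN := NeZero.pos N
  set clamp : ℕ → Fin N := fun k => ⟨min k (N - 1), by omega⟩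
  have hclamp : Monotone clamp := fun i j hij => Fin.mk_le_mk.2 (by omega)
  have hclamp_val : ∀ n : Fin N, clamp n = n := fun n => Fin.ext (by simp [clamp]; omega)
  obtain ⟨v, hv⟩ := hc.exists_potential (hx.comp hclamp) (hy.comp hclamp)
  exact ⟨fun n => v n, fun n m => by simpa [hclamp_val] using hv n m⟩

end Monge

theorem ConvexOn.map_add_sub_map_le {𝕜 : Type*} [Field 𝕜] [LinearOrder 𝕜] [IsStrictOrderedRing 𝕜]
    {f : 𝕜 → 𝕜} (hf : ConvexOn 𝕜 univ f) {s t d : 𝕜} (hst : s ≤ t) (hd : 0 ≤ d) :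
    f (s + d) - f s ≤ f (t + d) - f t := by
  rcases hd.eq_or_lt with rfl | hd
  · simp
  rcases hst.eq_or_lt with rfl | hst
  · simp
  have h₁ := hf.secant_mono_aux1 (mem_univ s) (mem_univ (t + d))
    (by linarith : s < s + d) (by linarith : s + d < t + d)
  have h₂ := hf.secant_mono_aux1 (mem_univ s) (mem_univ (t + d)) hst (by linarith : t < t + d)
  have key : (t + d - s) * (f (s + d) - f s - (f (t + d) - f t)) ≤ 0 := by
    linear_combination h₁ + h₂
  linarith [nonpos_of_mul_nonpos_right key (by linarith : 0 < t + d - s)]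

theorem ConvexOn.isMonge_comp_sub {f : ℝ → ℝ} (hf : ConvexOn ℝ univ f) :
    IsMonge fun a b : ℝ => f (a - b) := fun a a' b b' ha hb => by
  have := hf.map_add_sub_map_le (by linarith : a - b' ≤ a' - b') (by linarith : 0 ≤ b' - b)
  simp only [sub_add_sub_cancel] at this
  linarith

theorem convexOn_abs_rpow {p : ℝ} (hp : 1 ≤ p) : ConvexOn ℝ univ fun t : ℝ => |t| ^ p := by
  have himage : (|·|) '' univ = Ici (0 : ℝ) := by
    ext t
    exact ⟨by rintro ⟨s, -, rfl⟩; exact abs_nonneg s, fun ht => ⟨t, mem_univ t, abs_of_nonneg ht⟩⟩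
  refine ConvexOn.comp (g := fun t => t ^ p) ?_ convexOn_univ_norm ?_ <;> rw [himage]
  exacts [convexOn_rpow hp, fun s hs t _ hst => Real.rpow_le_rpow hs hst (by linarith)]

theorem isMonge_dist_rpow {p : ℝ} (hp : 1 ≤ p) : IsMonge fun a b : ℝ => dist a b ^ p :=
  (convexOn_abs_rpow hp).isMonge_comp_sub

section Couplings

variable {X Y : Type*} [MeasurableSpace X] [MeasurableSpace Y]

theorem integral_comp_fst_add_comp_snd {γ : Measure (X × Y)} {φ : X → ℝ} {ψ : Y → ℝ}
    (hφ : Integrable φ (γ.map Prod.fst)) (hψ : Integrable ψ (γ.map Prod.snd)) :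
    ∫ q, (φ q.1 + ψ q.2) ∂γ = ∫ a, φ a ∂γ.map Prod.fst + ∫ b, ψ b ∂γ.map Prod.snd := by
  rw [integral_map measurable_fst.aemeasurable hφ.aestronglyMeasurable,
    integral_map measurable_snd.aemeasurable hψ.aestronglyMeasurable]
  exact integral_add (hφ.comp_measurable measurable_fst) (hψ.comp_measurable measurable_snd)

theorem lintegral_ofReal_le_of_potentials {γ₀ γ : Measure (X × Y)} {c : X × Y → ℝ}
    (hc : Measurable c) (hc₀ : 0 ≤ c) (h₁ : γ₀.map Prod.fst = γ.map Prod.fst)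
    (h₂ : γ₀.map Prod.snd = γ.map Prod.snd) {φ : X → ℝ} {ψ : Y → ℝ}
    (hφ : Integrable φ (γ.map Prod.fst)) (hψ : Integrable ψ (γ.map Prod.snd))
    (h₀ : ∀ᵐ q ∂γ₀, φ q.1 + ψ q.2 = c q) (h : ∀ᵐ q ∂γ, φ q.1 + ψ q.2 ≤ c q) :
    ∫⁻ q, ENNReal.ofReal (c q) ∂γ₀ ≤ ∫⁻ q, ENNReal.ofReal (c q) ∂γ := by
  have hφ₀ : Integrable φ (γ₀.map Prod.fst) := h₁ ▸ hφ
  have hψ₀ : Integrable ψ (γ₀.map Prod.snd) := h₂ ▸ hψ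
  have hc₀_int : Integrable c γ₀ :=
    ((hφ₀.comp_measurable measurable_fst).add (hψ₀.comp_measurable measurable_snd)).congr h₀
  by_cases htop : ∫⁻ q, ENNReal.ofReal (c q) ∂γ = ∞
  · exact htop ▸ le_top
  have hc_int : Integrable c γ :=
    (lintegral_ofReal_ne_top_iff_integrable hc.aestronglyMeasurable (ae_of_all _ hc₀)).1 htop
  rw [← ofReal_integral_eq_lintegral_ofReal hc₀_int (ae_of_all _ hc₀),
    ← ofReal_integral_eq_lintegral_ofReal hc_int (ae_of_all _ hc₀)]
  refine ENNReal.ofReal_le_ofReal ?_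
  calc ∫ q, c q ∂γ₀ = ∫ q, (φ q.1 + ψ q.2) ∂γ₀ := integral_congr_ae (h₀.mono fun _ => Eq.symm)
    _ = ∫ q, (φ q.1 + ψ q.2) ∂γ := by
      rw [integral_comp_fst_add_comp_snd hφ₀ hψ₀, integral_comp_fst_add_comp_snd hφ hψ, h₁, h₂]
    _ ≤ ∫ q, c q ∂γ := integral_mono_ae
      ((hφ.comp_measurable measurable_fst).add (hψ.comp_measurable measurable_snd)) hc_int h

noncomputable def empiricalMeasure {N : ℕ} (x : Fin N → X) : Measure X :=
  (N : ℝ≥0∞)⁻¹ • ∑ n, Measure.dirac (x n)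

variable {N : ℕ}

instance [NeZero N] (x : Fin N → X) : IsProbabilityMeasure (empiricalMeasure x) :=
  ⟨by simp [empiricalMeasure, ENNReal.inv_mul_cancel (NeZero.ne (N : ℝ≥0∞)) (natCast_ne_top N)]⟩

theorem map_empiricalMeasure {f : X → Y} (hf : Measurable f) (x : Fin N → X) :
    (empiricalMeasure x).map f = empiricalMeasure (f ∘ x) := by
  simp only [empiricalMeasure, Measure.map_smul, Measure.map_finset_sum hf.aemeasurable,
    Measure.map_dirac' hf, Function.comp_apply]

variable [MeasurableSingletonClass X]

theorem lintegral_empiricalMeasure (x : Fin N → X) (f : X → ℝ≥0∞) :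
    ∫⁻ a, f a ∂empiricalMeasure x = (N : ℝ≥0∞)⁻¹ * ∑ n, f (x n) := by
  simp [empiricalMeasure, lintegral_finsetSum_measure]

theorem ae_empiricalMeasure_iff {x : Fin N → X} {P : X → Prop} :
    (∀ᵐ a ∂empiricalMeasure x, P a) ↔ ∀ n, P (x n) := by
  rw [empiricalMeasure,
    Measure.ae_ennreal_smul_measure_iff (ENNReal.inv_ne_zero.2 (natCast_ne_top N)),
    ← Measure.sum_fintype, Measure.ae_sum_iff]
  simp [ae_dirac_eq]

theorem integrable_empiricalMeasure [NeZero N] {E : Type*} [NormedAddCommGroup E]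
    (x : Fin N → X) (f : X → E) : Integrable f (empiricalMeasure x) :=
  (integrable_finsetSum_measure.2 fun _ _ => integrable_dirac enorm_lt_top).smul_measure
    (ENNReal.inv_ne_top.2 (NeZero.ne _))

variable [MeasurableSingletonClass Y]

theorem lintegral_empiricalMeasure_pair_le [NeZero N] {x : Fin N → X} {y : Fin N → Y}
    {c : X → Y → ℝ} (hc : Measurable (Function.uncurry c)) (hc₀ : ∀ a b, 0 ≤ c a b)
    {v : Fin N → ℝ} (hv : ∀ n m, c (x n) (y n) - v n ≤ c (x n) (y m) - v m)
    {γ : Measure (X × Y)} (h₁ : γ.map Prod.fst = empiricalMeasure x)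
    (h₂ : γ.map Prod.snd = empiricalMeasure y) :
    ∫⁻ q, ENNReal.ofReal (c q.1 q.2) ∂empiricalMeasure (fun n => (x n, y n)) ≤
      ∫⁻ q, ENNReal.ofReal (c q.1 q.2) ∂γ := by
  obtain ⟨φ, ψ, hle, heq⟩ := exists_dual_potentials hv
  have hx_ae : ∀ᵐ q ∂γ, q.1 ∈ range x :=
    ae_of_ae_map measurable_fst.aemeasurable
      (h₁ ▸ ae_empiricalMeasure_iff.2 fun n => mem_range_self n)
  refine lintegral_ofReal_le_of_potentials hc (fun q => hc₀ q.1 q.2)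
    ((map_empiricalMeasure measurable_fst _).trans h₁.symm)
    ((map_empiricalMeasure measurable_snd _).trans h₂.symm)
    (h₁ ▸ integrable_empiricalMeasure x φ) (h₂ ▸ integrable_empiricalMeasure y ψ)
    (ae_empiricalMeasure_iff.2 heq) ?_
  filter_upwards [hx_ae] with q ⟨n, hn⟩
  exact hn ▸ hle n q.2

end Couplings

/-- Sorted-samples formula for the `p`-Wasserstein distance between two empirical measures
with the same number of atoms: if the samples are sorted in ascending order, then
`W_p(μ,ν)^p = (1/N) ∑ₙ |xₙ − yₙ|^p`. -/
theorem wasserstein_empirical_sorted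
    (p : ℝ) (hp : 1 ≤ p) (N : ℕ) (hN : 0 < N)
    (x y : Fin N → ℝ) (hx : Monotone x) (hy : Monotone y) :
    wassersteinDist p
        ((N : ℝ≥0∞)⁻¹ • ∑ n : Fin N, Measure.dirac (x n))
        ((N : ℝ≥0∞)⁻¹ • ∑ n : Fin N, Measure.dirac (y n)) ^ p
      = (N : ℝ≥0∞)⁻¹ * ∑ n : Fin N, ENNReal.ofReal (|x n - y n| ^ p) := by
  have : NeZero N := ⟨hN.ne'⟩
  obtain ⟨v, hv⟩ := (isMonge_dist_rpow hp).exists_potential_fin hx hy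
  have hpair : (N : ℝ≥0∞)⁻¹ * ∑ n : Fin N, ENNReal.ofReal (|x n - y n| ^ p) =
      ∫⁻ q, ENNReal.ofReal (dist q.1 q.2 ^ p) ∂empiricalMeasure (fun n => (x n, y n)) := by
    simp [lintegral_empiricalMeasure, Real.dist_eq]
  change wassersteinDist p (empiricalMeasure x) (empiricalMeasure y) ^ p = _
  rw [wassersteinDist_rpow (by linarith), hpair]
  refine le_antisymm (iInf₂_le _ ⟨inferInstance, map_empiricalMeasure measurable_fst _,
    map_empiricalMeasure measurable_snd _⟩) (le_iInf₂ fun γ hγ => ?_)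
  exact lintegral_empiricalMeasure_pair_le (c := fun a b => dist a b ^ p) (by fun_prop)
    (fun _ _ => by positivity) hv hγ.2.1 hγ.2.2
end

section
/- Injectivity of the generalized Radon transform defined by odd-degree homogeneous polynomials: let m be an odd positive integer and for θ = (θ_α)_{|α|=m} (indexed by multi-indices α ∈ ℕ^d with |α| = ∑ᵢ αᵢ = m) let g(x,θ) = ∑_{|α|=m} θ_α x^α, where x^α = ∏ᵢ xᵢ^{αᵢ}. If μ and ν are compactly supported Borel probability measures on ℝ^d such that for every θ with ∑_{|α|=m} θ_α² = 1 the pushforward measures g(·,θ)_#μ and g(·,θ)_#ν coincide, then μ = ν. -/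
/-!
For a linear functional `L x = ∑ ξᵢ xᵢ`, the multinomial theorem writes `(L x)^m` as a homogeneous
form of degree `m`; rescaling its coefficient vector to unit length, the hypothesis shows that `μ`
and `ν` have the same pushforward under `x ↦ (L x)^m`. As `m` is odd, `t ↦ t^m` is a measurable
embedding of `ℝ`, so `μ` and `ν` have the same pushforward under every linear functional, hence the
same characteristic function (Cramér–Wold), and therefore coincide.
-/

open MeasureTheory

theorem MeasureTheory.Measure.ext_of_map_strongDual {E : Type*} [NormedAddCommGroup E]
    [NormedSpace ℝ E] [CompleteSpace E] [MeasurableSpace E] [BorelSpace E]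
    [SecondCountableTopology E] {μ ν : Measure E} [IsFiniteMeasure μ] [IsFiniteMeasure ν]
    (h : ∀ L : StrongDual ℝ E, μ.map L = ν.map L) : μ = ν :=
  Measure.ext_of_charFunDual <| funext fun L ↦ by
    rw [charFunDual_eq_charFun_map_one, charFunDual_eq_charFun_map_one, h L]

theorem MeasureTheory.Measure.map_comp_eq_of_map_eq {α β γ : Type*} [MeasurableSpace α]
    [MeasurableSpace β] [MeasurableSpace γ] {μ ν : Measure α} {f : α → β} {g : β → γ}
    (hf : Measurable f) (hg : Measurable g) (h : μ.map f = ν.map f) :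
    μ.map (g ∘ f) = ν.map (g ∘ f) := by
  rw [← Measure.map_map hg hf, ← Measure.map_map hg hf, h]

theorem Odd.measurableEmbedding_pow {m : ℕ} (hm : Odd m) :
    MeasurableEmbedding fun t : ℝ ↦ t ^ m :=
  (continuous_pow m).measurableEmbedding hm.strictMono_pow.injective

theorem StrongDual.apply_eq_sum_apply_single_mul {ι : Type*} [Fintype ι] [DecidableEq ι]
    (L : StrongDual ℝ (ι → ℝ)) (x : ι → ℝ) :
    L x = ∑ i, L (Pi.single i 1) * x i := by
  conv_lhs => rw [← Finset.univ_sum_single x, map_sum]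
  refine Finset.sum_congr rfl fun i _ ↦ ?_
  rw [mul_comm, ← smul_eq_mul, ← map_smul, ← Pi.single_smul, smul_eq_mul, mul_one]

noncomputable def homogeneousForm (d m : ℕ) (θ : (Fin d → ℕ) → ℝ) (x : Fin d → ℝ) : ℝ :=
  ∑ α ∈ Finset.Nat.antidiagonalTuple d m, θ α * ∏ i, x i ^ α i

section homogeneousForm

variable {d m : ℕ}

theorem continuous_homogeneousForm (θ : (Fin d → ℕ) → ℝ) :
    Continuous (homogeneousForm d m θ) := by
  unfold homogeneousForm
  fun_prop

theorem homogeneousForm_smul (c : ℝ) (θ : (Fin d → ℕ) → ℝ) :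
    homogeneousForm d m (c • θ) = fun x ↦ c * homogeneousForm d m θ x := by
  ext x
  simp only [homogeneousForm, Finset.mul_sum, Pi.smul_apply, smul_eq_mul, mul_assoc]

theorem homogeneousForm_eq_zero_of_sum_sq_eq_zero {θ : (Fin d → ℕ) → ℝ}
    (hθ : ∑ α ∈ Finset.Nat.antidiagonalTuple d m, θ α ^ 2 = 0) :
    homogeneousForm d m θ = 0 := by
  have hzero := (Finset.sum_eq_zero_iff_of_nonneg fun α _ ↦ sq_nonneg (θ α)).1 hθ
  ext x
  exact Finset.sum_eq_zero fun α hα ↦ by simp [pow_eq_zero_iff two_ne_zero |>.1 (hzero α hα)]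

theorem sum_mul_pow_eq_homogeneousForm (ξ x : Fin d → ℝ) :
    (∑ i, ξ i * x i) ^ m =
      homogeneousForm d m (fun α ↦ Nat.multinomial Finset.univ α * ∏ i, ξ i ^ α i) x := by
  rw [Finset.sum_pow_eq_sum_piAntidiag, Finset.piAntidiag_univ_fin_eq_antidiagonalTuple,
    homogeneousForm]
  refine Finset.sum_congr rfl fun α _ ↦ ?_
  rw [mul_assoc, ← Finset.prod_mul_distrib]
  simp only [mul_pow]

variable {μ ν : Measure (Fin d → ℝ)}

theorem map_homogeneousForm_eq_of_unit [IsProbabilityMeasure μ] [IsProbabilityMeasure ν]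
    (h : ∀ θ : (Fin d → ℕ) → ℝ, ∑ α ∈ Finset.Nat.antidiagonalTuple d m, θ α ^ 2 = 1 →
      μ.map (homogeneousForm d m θ) = ν.map (homogeneousForm d m θ))
    (θ : (Fin d → ℕ) → ℝ) :
    μ.map (homogeneousForm d m θ) = ν.map (homogeneousForm d m θ) := by
  rcases (Finset.sum_nonneg fun α _ ↦ sq_nonneg (θ α) :
      0 ≤ ∑ α ∈ Finset.Nat.antidiagonalTuple d m, θ α ^ 2).eq_or_lt with hS | hS
  · rw [homogeneousForm_eq_zero_of_sum_sq_eq_zero hS.symm, Pi.zero_def, Measure.map_const,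
      Measure.map_const, measure_univ, measure_univ]
  · set s := Real.sqrt (∑ α ∈ Finset.Nat.antidiagonalTuple d m, θ α ^ 2)
    have hs : s ≠ 0 := (Real.sqrt_pos.2 hS).ne'
    have hs_sq : s ^ 2 = ∑ α ∈ Finset.Nat.antidiagonalTuple d m, θ α ^ 2 := Real.sq_sqrt hS.le
    have hunit : ∑ α ∈ Finset.Nat.antidiagonalTuple d m, (s⁻¹ • θ) α ^ 2 = 1 := by
      simp only [Pi.smul_apply, smul_eq_mul, mul_pow, ← Finset.mul_sum, inv_pow, hs_sq]
      exact inv_mul_cancel₀ hS.ne'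
    rw [← smul_inv_smul₀ hs θ, homogeneousForm_smul]
    exact Measure.map_comp_eq_of_map_eq (continuous_homogeneousForm _).measurable
      (measurable_const_mul s) (h _ hunit)

theorem map_pow_strongDual_eq_of_map_homogeneousForm_eq
    (h : ∀ θ : (Fin d → ℕ) → ℝ, μ.map (homogeneousForm d m θ) = ν.map (homogeneousForm d m θ))
    (L : StrongDual ℝ (Fin d → ℝ)) :
    μ.map (fun x ↦ L x ^ m) = ν.map (fun x ↦ L x ^ m) := by
  have hL : (fun x ↦ L x ^ m) = homogeneousForm d m
      (fun α ↦ Nat.multinomial Finset.univ α * ∏ i, L (Pi.single i 1) ^ α i) := by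
    ext x
    rw [StrongDual.apply_eq_sum_apply_single_mul, sum_mul_pow_eq_homogeneousForm]
  rw [hL]
  exact h _

end homogeneousForm

theorem odd_polynomial_radon_injective_general (d m : ℕ) (hm_odd : Odd m)
    (μ ν : Measure (Fin d → ℝ))
    [IsProbabilityMeasure μ] [IsProbabilityMeasure ν]
    (h : ∀ θ : (Fin d → ℕ) → ℝ,
      ∑ α ∈ Finset.Nat.antidiagonalTuple d m, θ α ^ 2 = 1 →
      μ.map (fun x => ∑ α ∈ Finset.Nat.antidiagonalTuple d m, θ α * ∏ i, x i ^ α i)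
        = ν.map (fun x => ∑ α ∈ Finset.Nat.antidiagonalTuple d m, θ α * ∏ i, x i ^ α i)) :
    μ = ν := by
  have hpow := map_pow_strongDual_eq_of_map_homogeneousForm_eq (map_homogeneousForm_eq_of_unit h)
  refine Measure.ext_of_map_strongDual fun L ↦ hm_odd.measurableEmbedding_pow.map_injective ?_
  rw [Measure.map_map (continuous_pow m).measurable L.measurable,
    Measure.map_map (continuous_pow m).measurable L.measurable]
  exact hpow L

/-- Injectivity of the generalized Radon transform defined by odd-degree homogeneous
polynomials: if `m` is an odd positive integer and two compactly supported Borel probability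
measures on `ℝ^d` have equal pushforwards under every homogeneous polynomial
`x ↦ ∑_{|α| = m} θ_α x^α` with unit coefficient vector `θ`, then the measures coincide.
Multi-indices `α` with `|α| = ∑ᵢ αᵢ = m` are enumerated by `Finset.Nat.antidiagonalTuple d m`. -/
theorem odd_polynomial_radon_injective (d m : ℕ) (hm_odd : Odd m) (hm_pos : 0 < m)
    (μ ν : Measure (Fin d → ℝ))
    [IsProbabilityMeasure μ] [IsProbabilityMeasure ν]
    (hμc : ∃ K : Set (Fin d → ℝ), IsCompact K ∧ μ Kᶜ = 0)
    (hνc : ∃ K : Set (Fin d → ℝ), IsCompact K ∧ ν Kᶜ = 0)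
    (h : ∀ θ : (Fin d → ℕ) → ℝ,
      ∑ α ∈ Finset.Nat.antidiagonalTuple d m, θ α ^ 2 = 1 →
      μ.map (fun x => ∑ α ∈ Finset.Nat.antidiagonalTuple d m, θ α * ∏ i, x i ^ α i)
        = ν.map (fun x => ∑ α ∈ Finset.Nat.antidiagonalTuple d m, θ α * ∏ i, x i ^ α i)) :
    μ = ν :=
  odd_polynomial_radon_injective_general d m hm_odd μ ν h
end
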